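/- Let n ≥ 1, let cap : Fin n → Fin n → ℝ≥0∞ be edge capacities on a directed graph, and for vertices i, j let β(i, j) : ℝ≥0∞ be the supremum, over all walks from i to j of length at least 1, of the bottleneck of the walk. Then for every t : ℝ≥0∞ with 0 < t, one has t ≤ β(i, j) if and only if there exists a walk of length at least 1 from i to j all of whose edges (u, v) satisfy t ≤ cap u v. -/
import Mathlib


open scoped ENNReal

/-- A walk of length `k` from `i` to `j`: a function `v : Fin (k+1) → Fin n`
with `v 0 = i` and `v k = j`. -/
def IsWalkTo {n : ℕ} (k : ℕ) (v : Fin (k + 1) → Fin n) (i j : Fin n) : Prop :=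
  v 0 = i ∧ v (Fin.last k) = j

/-- The bottleneck of a walk: the minimum capacity of its edges. -/
noncomputable def bott {n : ℕ} (cap : Fin n → Fin n → ℝ≥0∞) (k : ℕ)
    (v : Fin (k + 1) → Fin n) : ℝ≥0∞ :=
  ⨅ t : Fin k, cap (v t.castSucc) (v t.succ)

/-- `β(i, j)`: the supremum, over all walks from `i` to `j` of length at least 1,
of the bottleneck of the walk. -/
noncomputable def maxBottleneck {n : ℕ} (cap : Fin n → Fin n → ℝ≥0∞)
    (i j : Fin n) : ℝ≥0∞ :=
  ⨆ (k : ℕ) (_ : 1 ≤ k) (v : Fin (k + 1) → Fin n) (_ : IsWalkTo k v i j), bott cap k v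

theorem stmt6 {n : ℕ} (hn : 1 ≤ n) (cap : Fin n → Fin n → ℝ≥0∞) (i j : Fin n)
    (t : ℝ≥0∞) (ht : 0 < t) :
    t ≤ maxBottleneck cap i j ↔
      ∃ k, 1 ≤ k ∧ ∃ v : Fin (k + 1) → Fin n, IsWalkTo k v i j ∧
        ∀ s : Fin k, t ≤ cap (v s.castSucc) (v s.succ) := by
  set T : Set ℝ≥0∞ :=
    {x | ∃ k, 1 ≤ k ∧ ∃ v : Fin (k + 1) → Fin n, IsWalkTo k v i j ∧ bott cap k v = x} with hT
  have hsub : T ⊆ Set.range (fun p : Fin n × Fin n => cap p.1 p.2) := by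
    rintro x ⟨k, hk, v, hv, rfl⟩
    have : Nonempty (Fin k) := ⟨⟨0, hk⟩⟩
    obtain ⟨s, hs⟩ := exists_eq_ciInf_of_finite
      (f := fun s : Fin k => cap (v s.castSucc) (v s.succ))
    exact ⟨(v s.castSucc, v s.succ), by simp [bott, ← hs]⟩
  have hfin : T.Finite := (Set.finite_range _).subset hsub
  have hne : T.Nonempty := by
    refine ⟨bott cap 1 (fun s => if s = 0 then i else j), 1, le_refl 1,
      fun s => if s = 0 then i else j, ⟨by simp, by simp [Fin.last]⟩, rfl⟩
  have heq : maxBottleneck cap i j = sSup T := by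
    apply le_antisymm
    · refine iSup_le fun k => iSup_le fun hk => iSup_le fun v => iSup_le fun hv => ?_
      exact le_sSup ⟨k, hk, v, hv, rfl⟩
    · refine sSup_le ?_
      rintro x ⟨k, hk, v, hv, rfl⟩
      exact le_iSup_of_le k (le_iSup_of_le hk (le_iSup_of_le v (le_iSup_of_le hv le_rfl)))
  constructor
  · intro h
    obtain ⟨k, hk, v, hv, hb⟩ := hne.csSup_mem hfin
    rw [heq, ← hb] at h
    exact ⟨k, hk, v, hv, fun s => h.trans (iInf_le _ s)⟩
  · rintro ⟨k, hk, v, hv, hcap⟩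
    rw [heq]
    exact le_trans (le_iInf hcap) (le_sSup ⟨k, hk, v, hv, rfl⟩)
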